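/- Assume 0 < τ < τ*. If W_1 and W_2 are substochastic n×n matrices with W_1 ≤ W_2 entrywise, then B̃_{-1}(τ,W_1) ≤ B̃_{-1}(τ,W_2) entrywise. -/

import Mathlib

open MeasureTheory Matrix Filter

noncomputable section

/-- Entrywise Bochner integral over `(0,∞)` of a matrix-valued function. -/
def intP {n : ℕ} (f : ℝ → Matrix (Fin n) (Fin n) ℝ) : Matrix (Fin n) (Fin n) ℝ :=
  Matrix.of fun i j => ∫ x in Set.Ioi (0:ℝ), f x i j

/-- Matrix exponential. -/
def mexp {n : ℕ} (A : Matrix (Fin n) (Fin n) ℝ) : Matrix (Fin n) (Fin n) ℝ :=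
  NormedSpace.exp A

/-- `∫_0^x e^{Gs} ds` (entrywise). -/
def cumExp {n : ℕ} (G : Matrix (Fin n) (Fin n) ℝ) (x : ℝ) : Matrix (Fin n) (Fin n) ℝ :=
  Matrix.of fun i j => ∫ s in (0:ℝ)..x, mexp (s • G) i j

/-- Irreducibility of a square matrix: for all `i ≠ j` there is a path from `i` to `j`
along nonzero entries. -/
def MatIrr {m : Type*} (A : Matrix m m ℝ) : Prop :=
  ∀ i j : m, i ≠ j → ∃ (r : ℕ) (p : ℕ → m), p 0 = i ∧ p r = j ∧
    ∀ k < r, A (p k) (p (k+1)) ≠ 0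

/-- Spectral radius of a real matrix: supremum of the moduli of its complex eigenvalues. -/
def specRad {m : Type*} [Fintype m] [DecidableEq m] (A : Matrix m m ℝ) : ℝ :=
  sSup ((fun z : ℂ => ‖z‖) '' (spectrum ℂ (A.map (algebraMap ℝ ℂ))))

/-- `A` is an M-matrix: `A = s•I − B` with `B ≥ 0` entrywise and `ρ(B) ≤ s`. -/
def IsMMatrix {m : Type*} [Fintype m] [DecidableEq m] (A : Matrix m m ℝ) : Prop :=
  ∃ (s : ℝ) (B : Matrix m m ℝ), (∀ i j, 0 ≤ B i j) ∧ specRad B ≤ s ∧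
    A = s • (1 : Matrix m m ℝ) - B

/-- `A = M − N` is a regular splitting: `M` invertible, `M⁻¹ ≥ 0`, `N ≥ 0`. -/
def RegSplit {n : ℕ} (A M N : Matrix (Fin n) (Fin n) ℝ) : Prop :=
  A = M - N ∧ IsUnit M.det ∧ (∀ i j, 0 ≤ M⁻¹ i j) ∧ (∀ i j, 0 ≤ N i j)

/-- The complex characteristic roots (eigenvalues with algebraic multiplicity)
of a real matrix. -/
def cRoots {n : ℕ} (Y : Matrix (Fin n) (Fin n) ℝ) : Multiset ℂ :=
  ((Y.map (algebraMap ℝ ℂ)).charpoly).roots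

/-- substochastic matrix -/
def Substoch {n : ℕ} (W : Matrix (Fin n) (Fin n) ℝ) : Prop :=
  (∀ i j, 0 ≤ W i j) ∧ ∀ i, ∑ j, W i j ≤ 1

/-- stochastic matrix -/
def StochM {n : ℕ} (W : Matrix (Fin n) (Fin n) ℝ) : Prop :=
  (∀ i j, 0 ≤ W i j) ∧ ∀ i, ∑ j, W i j = 1

/-- subgenerator -/
def IsSubGen {n : ℕ} (Y : Matrix (Fin n) (Fin n) ℝ) : Prop :=
  (∀ i j, i ≠ j → 0 ≤ Y i j) ∧ ∀ i, ∑ j, Y i j ≤ 0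

/-- generator -/
def IsGen {n : ℕ} (Y : Matrix (Fin n) (Fin n) ℝ) : Prop :=
  (∀ i j, i ≠ j → 0 ≤ Y i j) ∧ ∀ i, ∑ j, Y i j = 0

/-- The data of a Markov-modulated Lévy process: phase generator `Q`, Brownian
drifts `a` and volatilities `s` (denoted `σ` in the paper), Lévy densities `ν`,
phase-change jump densities `μ`, and `U0 = U(0)` (the atoms at 0 of the jump
distributions). -/
structure Dat (n : ℕ) where
  Q : Matrix (Fin n) (Fin n) ℝ
  a : Fin n → ℝ
  s : Fin n → ℝ
  ν : Fin n → ℝ → ℝ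
  μ : Fin n → Fin n → ℝ → ℝ
  U0 : Matrix (Fin n) (Fin n) ℝ

namespace Dat

variable {n : ℕ} (D : Dat n)

/-- The standing assumptions of the paper. -/
structure Good : Prop where
  hn : 1 ≤ n
  hQoff : ∀ i j, i ≠ j → 0 ≤ D.Q i j
  hQrow : ∀ i, ∑ j, D.Q i j = 0
  hQirr : MatIrr D.Q
  hs : ∀ i, 0 < D.s i
  hνc : ∀ i, ContinuousOn (D.ν i) (Set.Ioi 0)
  hν0 : ∀ i, ∀ x ∈ Set.Ioi (0:ℝ), 0 ≤ D.ν i x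
  hνi : ∀ i, IntegrableOn (D.ν i) (Set.Ioi 0)
  hU0d : ∀ i, D.U0 i i = 1
  hU0o : ∀ i j, i ≠ j → D.U0 i j ∈ Set.Icc (0:ℝ) 1
  hμc : ∀ i j, i ≠ j → ContinuousOn (D.μ i j) (Set.Ioi 0)
  hμ0 : ∀ i j, ∀ x ∈ Set.Ioi (0:ℝ), 0 ≤ D.μ i j x
  hμi : ∀ i j, i ≠ j → IntegrableOn (D.μ i j) (Set.Ioi 0)
  hμU : ∀ i j, i ≠ j → D.U0 i j + ∫ x in Set.Ioi (0:ℝ), D.μ i j x = 1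
  hμd : ∀ i x, D.μ i i x = 0

/-- `Δ_a`. -/
def Da : Matrix (Fin n) (Fin n) ℝ := Matrix.diagonal D.a

/-- `Δ_{σ²}`. -/
def Ds : Matrix (Fin n) (Fin n) ℝ := Matrix.diagonal fun i => (D.s i)^2

/-- `Δ_ν(x)`. -/
def Dν (x : ℝ) : Matrix (Fin n) (Fin n) ℝ := Matrix.diagonal fun i => D.ν i x

/-- `Q ∘ μ(x)` (Hadamard product). -/
def Qμ (x : ℝ) : Matrix (Fin n) (Fin n) ℝ := Matrix.of fun i j => D.Q i j * D.μ i j x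

/-- The matrix function `F`. -/
def F (Y : Matrix (Fin n) (Fin n) ℝ) : Matrix (Fin n) (Fin n) ℝ :=
  D.Da * Y + (1/2 : ℝ) • (D.Ds * (Y * Y))
    + intP (fun x => D.Dν x * (mexp (x • Y) - 1))
    + Matrix.hadamard D.Q D.U0
    + intP (fun x => D.Qμ x * mexp (x • Y))

/-- The drift `κ`, relative to the stationary vector `π` of `Q`. -/
def kappa (π : Fin n → ℝ) : ℝ :=
  ∑ i, π i * (D.a i + (∫ x in Set.Ioi (0:ℝ), x * D.ν i x)
    + ∑ j, D.Q i j * ∫ x in Set.Ioi (0:ℝ), x * D.μ i j x)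

/-- `π` is the (positive) stationary probability vector of `Q`. -/
def IsStat (π : Fin n → ℝ) : Prop :=
  (∀ i, 0 < π i) ∧ (∀ j, ∑ i, π i * D.Q i j = 0) ∧ ∑ i, π i = 1

/-- `H(τ, W)`. -/
def H (τ : ℝ) (W : Matrix (Fin n) (Fin n) ℝ) : Matrix (Fin n) (Fin n) ℝ :=
  intP (fun x => D.Dν x * (mexp ((τ⁻¹ * x) • (W - 1)) - 1))

/-- `K(τ, W)`. -/
def K (τ : ℝ) (W : Matrix (Fin n) (Fin n) ℝ) : Matrix (Fin n) (Fin n) ℝ :=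
  Matrix.hadamard D.Q D.U0 + intP (fun x => D.Qμ x * mexp ((τ⁻¹ * x) • (W - 1)))

/-- `B_1`. -/
def B1 : Matrix (Fin n) (Fin n) ℝ := D.Ds

/-- `B_0(τ)`. -/
def B0 (τ : ℝ) : Matrix (Fin n) (Fin n) ℝ := (2*τ) • D.Da - (2:ℝ) • D.Ds

/-- `B_{-1}(τ, W)`. -/
def Bm1 (τ : ℝ) (W : Matrix (Fin n) (Fin n) ℝ) : Matrix (Fin n) (Fin n) ℝ :=
  D.Ds - (2*τ) • D.Da + (2*τ^2) • (D.H τ W + D.K τ W)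

/-- Equation (QW): `B₁W² + B₀(τ)W + B₋₁(τ,W) = 0`. -/
def QW (τ : ℝ) (W : Matrix (Fin n) (Fin n) ℝ) : Prop :=
  D.B1 * (W * W) + D.B0 τ * W + D.Bm1 τ W = 0

/-- `B̃_{-1}(τ, W) = −B₀(τ)⁻¹ B₋₁(τ,W)`. -/
def Btm1 (τ : ℝ) (W : Matrix (Fin n) (Fin n) ℝ) : Matrix (Fin n) (Fin n) ℝ :=
  -(D.B0 τ)⁻¹ * D.Bm1 τ W

/-- `B̃_1(τ) = −B₀(τ)⁻¹ B₁`. -/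
def Bt1 (τ : ℝ) : Matrix (Fin n) (Fin n) ℝ := -(D.B0 τ)⁻¹ * D.B1

/-- `0 < τ < τ*`: `troot i` is the unique positive root `τ_i` of the quadratic
`σ_i² − 2τ a_i + 2τ²(q_ii − ∫_0^∞ ν_i)`, `τ` is positive, `τ < σ_i²/a_i` whenever
`a_i > 0`, and `τ < τ_i` for all `i`. -/
def TauOK (troot : Fin n → ℝ) (τ : ℝ) : Prop :=
  (∀ i, 0 < troot i ∧
      (D.s i)^2 - 2 * troot i * D.a i
        + 2 * (troot i)^2 * (D.Q i i - ∫ x in Set.Ioi (0:ℝ), D.ν i x) = 0 ∧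
      ∀ t > 0, (D.s i)^2 - 2 * t * D.a i
        + 2 * t^2 * (D.Q i i - ∫ x in Set.Ioi (0:ℝ), D.ν i x) = 0 → t = troot i) ∧
  0 < τ ∧ (∀ i, 0 < D.a i → τ < (D.s i)^2 / D.a i) ∧ (∀ i, τ < troot i)

/-- `ρ_i = ∫_0^∞ ν_i`. -/
def rho (i : Fin n) : ℝ := ∫ x in Set.Ioi (0:ℝ), D.ν i x

/-- `λ_i = ρ_i + |q_ii|`. -/
def lam (i : Fin n) : ℝ := D.rho i + |D.Q i i|

/-- `b_i`. -/
def b (i : Fin n) : ℝ := (Real.sqrt ((D.a i)^2 + 2 * D.lam i * (D.s i)^2) + D.a i) / (D.s i)^2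

/-- `c_i`. -/
def c (i : Fin n) : ℝ := D.b i - 2 * D.a i / (D.s i)^2

/-- `Ĉ(X)`. -/
def Chat (X : Matrix (Fin n) (Fin n) ℝ) : Matrix (Fin n) (Fin n) ℝ :=
  Matrix.hadamard (D.Q - Matrix.diagonal fun i => D.Q i i) D.U0
    + intP (fun x => D.Dν x * mexp (x • (X - Matrix.diagonal D.b)))
    + intP (fun x => D.Qμ x * mexp (x • (X - Matrix.diagonal D.b)))

/-- `NARE(W)`: the Riccati equation `S² − Δ_c S − S Δ_b + 2Δ_{σ²}⁻¹ Ĉ(W) = 0` in `S`. -/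
def NARE (W S : Matrix (Fin n) (Fin n) ℝ) : Prop :=
  S * S - Matrix.diagonal D.c * S - S * Matrix.diagonal D.b
    + (2:ℝ) • (Matrix.diagonal (fun i => ((D.s i)^2)⁻¹) * D.Chat W) = 0

/-- `S` is the minimal nonnegative solution of `NARE(W)`. -/
def MinSolNARE (W S : Matrix (Fin n) (Fin n) ℝ) : Prop :=
  (∀ i j, 0 ≤ S i j) ∧ D.NARE W S ∧
    ∀ T, (∀ i j, 0 ≤ T i j) → D.NARE W T → ∀ i j, S i j ≤ T i j

/-- `Λ` (relative to `G`). -/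
def Lam (G : Matrix (Fin n) (Fin n) ℝ) : Matrix (Fin n) (Fin n) ℝ :=
  intP (fun x => D.Dν x * cumExp G x) + intP (fun x => D.Qμ x * cumExp G x)

/-- `Θ = −2Δ_a − Δ_{σ²}G − 2Λ` (relative to `G`). -/
def Theta (G : Matrix (Fin n) (Fin n) ℝ) : Matrix (Fin n) (Fin n) ℝ :=
  (-2 : ℝ) • D.Da - D.Ds * G - (2:ℝ) • D.Lam G

/-- Integrability of the first moments `∫ x ν_i(x) dx`, `∫ x μ_ij(x) dx`. -/
def Moments : Prop :=
  (∀ i, IntegrableOn (fun x => x * D.ν i x) (Set.Ioi (0:ℝ))) ∧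
  (∀ i j, IntegrableOn (fun x => x * D.μ i j x) (Set.Ioi (0:ℝ)))

end Dat

/-!
`B₀(τ)` is diagonal with entries `2τaᵢ - 2σᵢ² < 0` (this is where `τ < σᵢ²/aᵢ` enters), so
`-B₀(τ)⁻¹` is a nonnegative diagonal matrix, and `W` enters `B₋₁(τ, W)` only through integrals of
`e^{τ⁻¹x(W - I)}` against the nonnegative densities `νᵢ` and `qᵢⱼμᵢⱼ`. Writing
`e^{t(W - I)} = e^{-t} e^{tW}` and expanding `e^{tW}` as a power series shows that it is entrywise
monotone in `W ≥ 0`, with entries in `[0, 1]` when `W` is substochastic; the latter bound also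
gives the domination needed for the integrals to exist.
-/

theorem Matrix.pow_apply_mono {m R : Type*} [Fintype m] [DecidableEq m] [Semiring R]
    [PartialOrder R] [IsOrderedRing R] {A B : Matrix m m R} (hA : ∀ i j, 0 ≤ A i j)
    (hAB : ∀ i j, A i j ≤ B i j) (k : ℕ) (i j : m) : (A ^ k) i j ≤ (B ^ k) i j := by
  have hB i j : 0 ≤ B i j := (hA i j).trans (hAB i j)
  induction k generalizing j with
  | zero => rfl
  | succ k ih =>
    rw [pow_succ, pow_succ, mul_apply, mul_apply]
    exact Finset.sum_le_sum fun l _ =>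
      mul_le_mul (ih l) (hAB l j) (hA l j) (pow_apply_nonneg hB k i l)

theorem Matrix.inv_diagonal_of_ne_zero {m K : Type*} [Fintype m] [DecidableEq m] [Field K]
    {d : m → K} (hd : ∀ i, d i ≠ 0) : (diagonal d)⁻¹ = diagonal d⁻¹ :=
  inv_eq_right_inv <| by
    rw [diagonal_mul_diagonal, ← diagonal_one]
    exact congrArg diagonal (funext fun i => mul_inv_cancel₀ (hd i))

namespace Substoch

variable {n : ℕ} {V W : Matrix (Fin n) (Fin n) ℝ}

theorem one : Substoch (1 : Matrix (Fin n) (Fin n) ℝ) :=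
  ⟨fun i j => by rw [one_apply]; split <;> norm_num, fun i => by simp [one_apply]⟩

theorem mul (hV : Substoch V) (hW : Substoch W) : Substoch (V * W) := by
  refine ⟨fun i j => ?_, fun i => ?_⟩
  · rw [mul_apply]
    exact Finset.sum_nonneg fun l _ => mul_nonneg (hV.1 i l) (hW.1 l j)
  · calc ∑ j, (V * W) i j = ∑ l, V i l * ∑ j, W l j := by
          simp only [mul_apply, Finset.mul_sum]
          exact Finset.sum_comm
      _ ≤ ∑ l, V i l * 1 :=
          Finset.sum_le_sum fun l _ => mul_le_mul_of_nonneg_left (hW.2 l) (hV.1 i l)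
      _ ≤ 1 := by simpa using hV.2 i

theorem pow (hW : Substoch W) (k : ℕ) : Substoch (W ^ k) := by
  induction k with
  | zero => rw [pow_zero]; exact one
  | succ k ih => rw [pow_succ]; exact ih.mul hW

theorem apply_le_one (hW : Substoch W) (i j : Fin n) : W i j ≤ 1 :=
  (Finset.single_le_sum (fun l _ => hW.1 i l) (Finset.mem_univ j)).trans (hW.2 i)

end Substoch

section MatrixExp

attribute [local instance] Matrix.linftyOpNormedRing Matrix.linftyOpNormedAlgebra

variable {n : ℕ}

theorem hasSum_mexp_smul_apply (t : ℝ) (W : Matrix (Fin n) (Fin n) ℝ) (i j : Fin n) :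
    HasSum (fun k : ℕ => (k.factorial : ℝ)⁻¹ * t ^ k * (W ^ k) i j) (mexp (t • W) i j) := by
  have h := Pi.hasSum.mp (Pi.hasSum.mp (NormedSpace.exp_series_hasSum_exp' (𝕂 := ℝ) (t • W)) i) j
  simp only [smul_pow, Matrix.smul_apply, smul_eq_mul, ← mul_assoc] at h
  exact h

theorem mexp_smul_apply_nonneg {W : Matrix (Fin n) (Fin n) ℝ} (hW : ∀ i j, 0 ≤ W i j) {t : ℝ}
    (ht : 0 ≤ t) (i j : Fin n) : 0 ≤ mexp (t • W) i j :=
  hasSum_le (fun k => by have := W.pow_apply_nonneg hW k i j; positivity) hasSum_zero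
    (hasSum_mexp_smul_apply t W i j)

theorem mexp_smul_apply_mono {V W : Matrix (Fin n) (Fin n) ℝ} (hV : ∀ i j, 0 ≤ V i j)
    (hVW : ∀ i j, V i j ≤ W i j) {t : ℝ} (ht : 0 ≤ t) (i j : Fin n) :
    mexp (t • V) i j ≤ mexp (t • W) i j :=
  hasSum_le (fun k => mul_le_mul_of_nonneg_left (V.pow_apply_mono hV hVW k i j) (by positivity))
    (hasSum_mexp_smul_apply t V i j) (hasSum_mexp_smul_apply t W i j)

theorem Substoch.mexp_smul_apply_le {W : Matrix (Fin n) (Fin n) ℝ} (hW : Substoch W) {t : ℝ}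
    (ht : 0 ≤ t) (i j : Fin n) : mexp (t • W) i j ≤ Real.exp t := by
  have hexp : HasSum (fun k : ℕ => (k.factorial : ℝ)⁻¹ * t ^ k) (Real.exp t) := by
    simpa [Real.exp_eq_exp_ℝ, smul_eq_mul] using NormedSpace.exp_series_hasSum_exp' (𝕂 := ℝ) t
  refine hasSum_le (fun k => ?_) (hasSum_mexp_smul_apply t W i j) hexp
  simpa using mul_le_mul_of_nonneg_left ((hW.pow k).apply_le_one i j)
    (by positivity : 0 ≤ (k.factorial : ℝ)⁻¹ * t ^ k)

theorem mexp_smul_sub_one (t : ℝ) (W : Matrix (Fin n) (Fin n) ℝ) :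
    mexp (t • (W - 1)) = Real.exp (-t) • mexp (t • W) := by
  have hsplit : t • (W - 1) = t • W + algebraMap ℝ _ (-t) := by
    rw [Algebra.algebraMap_eq_smul_one, smul_sub, neg_smul, sub_eq_add_neg]
  have hscalar : NormedSpace.exp (algebraMap ℝ (Matrix (Fin n) (Fin n) ℝ) (-t))
      = algebraMap ℝ _ (Real.exp (-t)) := by
    rw [Real.exp_eq_exp_ℝ]; exact (NormedSpace.algebraMap_exp_comm _).symm
  rw [mexp, hsplit, Matrix.exp_add_of_commute _ _ (Algebra.commute_algebraMap_right _ _),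
    hscalar, ← Algebra.commutes, ← Algebra.smul_def, mexp]

theorem continuous_mexp_smul_apply (G : Matrix (Fin n) (Fin n) ℝ) (i j : Fin n) :
    Continuous fun t : ℝ => mexp (t • G) i j := by
  have hsmul : Continuous fun t : ℝ => t • G := continuous_id.smul continuous_const
  exact (continuous_apply j).comp <| (continuous_apply i).comp <|
    NormedSpace.exp_continuous.comp hsmul

end MatrixExp

section ExpKernel

open Set

variable {n : ℕ} {V W : Matrix (Fin n) (Fin n) ℝ} {t τ : ℝ}

theorem Substoch.mexp_smul_sub_one_apply_mem_Icc (hW : Substoch W) (ht : 0 ≤ t) (i j : Fin n) :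
    mexp (t • (W - 1)) i j ∈ Icc 0 1 := by
  rw [mexp_smul_sub_one, Matrix.smul_apply, smul_eq_mul]
  refine ⟨mul_nonneg (Real.exp_nonneg _) (mexp_smul_apply_nonneg hW.1 ht i j), ?_⟩
  calc Real.exp (-t) * mexp (t • W) i j ≤ Real.exp (-t) * Real.exp t :=
        mul_le_mul_of_nonneg_left (hW.mexp_smul_apply_le ht i j) (Real.exp_nonneg _)
    _ = 1 := by rw [← Real.exp_add, neg_add_cancel, Real.exp_zero]

theorem mexp_smul_sub_one_apply_mono (hV : ∀ i j, 0 ≤ V i j) (hVW : ∀ i j, V i j ≤ W i j)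
    (ht : 0 ≤ t) (i j : Fin n) : mexp (t • (V - 1)) i j ≤ mexp (t • (W - 1)) i j := by
  simp only [mexp_smul_sub_one, Matrix.smul_apply, smul_eq_mul]
  exact mul_le_mul_of_nonneg_left (mexp_smul_apply_mono hV hVW ht i j) (Real.exp_nonneg _)

theorem Substoch.integrableOn_mul_mexp_apply (hW : Substoch W) (hτ : 0 ≤ τ) {f : ℝ → ℝ}
    (hf : IntegrableOn f (Ioi 0)) (i j : Fin n) :
    IntegrableOn (fun x => f x * mexp ((τ⁻¹ * x) • (W - 1)) i j) (Ioi 0) := by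
  refine hf.mul_bdd (c := 1)
    ((continuous_mexp_smul_apply (W - 1) i j).comp (continuous_const_mul τ⁻¹)).aestronglyMeasurable
    ((ae_restrict_iff' measurableSet_Ioi).2 (ae_of_all _ fun x (hx : 0 < x) => ?_))
  obtain ⟨h0, h1⟩ := hW.mexp_smul_sub_one_apply_mem_Icc (by positivity : 0 ≤ τ⁻¹ * x) i j
  exact (Real.norm_of_nonneg h0).trans_le h1

theorem setIntegral_mul_mexp_apply_mono (hV : Substoch V) (hW : Substoch W)
    (hVW : ∀ i j, V i j ≤ W i j) (hτ : 0 ≤ τ) {f : ℝ → ℝ} (hf : IntegrableOn f (Ioi 0))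
    (hf0 : ∀ x ∈ Ioi 0, 0 ≤ f x) (i j : Fin n) :
    ∫ x in Ioi 0, f x * mexp ((τ⁻¹ * x) • (V - 1)) i j
      ≤ ∫ x in Ioi 0, f x * mexp ((τ⁻¹ * x) • (W - 1)) i j :=
  setIntegral_mono_on (hV.integrableOn_mul_mexp_apply hτ hf i j)
    (hW.integrableOn_mul_mexp_apply hτ hf i j) measurableSet_Ioi fun x hx =>
      mul_le_mul_of_nonneg_left
        (mexp_smul_sub_one_apply_mono hV.1 hVW (by have : 0 < x := hx; positivity) i j) (hf0 x hx)

end ExpKernel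

namespace Dat

open Set

variable {n : ℕ} {D : Dat n} {V W : Matrix (Fin n) (Fin n) ℝ} {τ : ℝ}

theorem Good.Q_mul_μ_nonneg (hD : D.Good) {x : ℝ} (hx : x ∈ Ioi 0) (i k : Fin n) :
    0 ≤ D.Q i k * D.μ i k x := by
  rcases eq_or_ne i k with rfl | hik
  · simp [hD.hμd]
  · exact mul_nonneg (hD.hQoff i k hik) (hD.hμ0 i k x hx)

theorem Good.integrableOn_Q_mul_μ (hD : D.Good) (i k : Fin n) :
    IntegrableOn (fun x => D.Q i k * D.μ i k x) (Ioi 0) := by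
  rcases eq_or_ne i k with rfl | hik
  · simp [hD.hμd]
  · exact (hD.hμi i k hik).const_mul _

theorem Good.H_apply_mono (hD : D.Good) (hτ : 0 ≤ τ) (hV : Substoch V) (hW : Substoch W)
    (hVW : ∀ i j, V i j ≤ W i j) (i j : Fin n) : D.H τ V i j ≤ D.H τ W i j := by
  have hH : ∀ U : Matrix (Fin n) (Fin n) ℝ, Substoch U → D.H τ U i j =
      (∫ x in Ioi 0, D.ν i x * mexp ((τ⁻¹ * x) • (U - 1)) i j)
        - (∫ x in Ioi 0, D.ν i x) * (1 : Matrix (Fin n) (Fin n) ℝ) i j := by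
    intro U hU
    simp only [Dat.H, intP, of_apply, Dat.Dν, diagonal_mul, Matrix.sub_apply, mul_sub]
    rw [integral_sub (hU.integrableOn_mul_mexp_apply hτ (hD.hνi i) i j)
      ((hD.hνi i).mul_const _), integral_mul_const]
  rw [hH V hV, hH W hW]
  exact sub_le_sub_right
    (setIntegral_mul_mexp_apply_mono hV hW hVW hτ (hD.hνi i) (hD.hν0 i) i j) _

theorem Good.K_apply_mono (hD : D.Good) (hτ : 0 ≤ τ) (hV : Substoch V) (hW : Substoch W)
    (hVW : ∀ i j, V i j ≤ W i j) (i j : Fin n) : D.K τ V i j ≤ D.K τ W i j := by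
  have hK : ∀ U : Matrix (Fin n) (Fin n) ℝ, Substoch U → D.K τ U i j =
      hadamard D.Q D.U0 i j
        + ∑ k, ∫ x in Ioi 0, D.Q i k * D.μ i k x * mexp ((τ⁻¹ * x) • (U - 1)) k j := by
    intro U hU
    simp only [Dat.K, Matrix.add_apply, intP, of_apply, mul_apply, Dat.Qμ]
    rw [integral_finsetSum _ fun k _ =>
      hU.integrableOn_mul_mexp_apply hτ (hD.integrableOn_Q_mul_μ i k) k j]
  rw [hK V hV, hK W hW]
  exact add_le_add_right (Finset.sum_le_sum fun k _ => setIntegral_mul_mexp_apply_mono hV hW hVW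
    hτ (hD.integrableOn_Q_mul_μ i k) (fun x hx => hD.Q_mul_μ_nonneg hx i k) k j) _

theorem Good.Bm1_apply_mono (hD : D.Good) (hτ : 0 ≤ τ) (hV : Substoch V) (hW : Substoch W)
    (hVW : ∀ i j, V i j ≤ W i j) (i j : Fin n) : D.Bm1 τ V i j ≤ D.Bm1 τ W i j := by
  simp only [Dat.Bm1, Matrix.add_apply, Matrix.smul_apply, smul_eq_mul]
  gcongr
  exacts [hD.H_apply_mono hτ hV hW hVW i j, hD.K_apply_mono hτ hV hW hVW i j]

theorem B0_eq_diagonal (D : Dat n) (τ : ℝ) :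
    D.B0 τ = diagonal fun i => 2 * τ * D.a i - 2 * D.s i ^ 2 := by
  simp only [Dat.B0, Dat.Da, Dat.Ds, ← diagonal_smul, ← diagonal_sub]
  rfl

theorem Good.B0_diag_neg (hD : D.Good) (hτ : 0 ≤ τ)
    (hτa : ∀ i, 0 < D.a i → τ < D.s i ^ 2 / D.a i) (i : Fin n) :
    2 * τ * D.a i - 2 * D.s i ^ 2 < 0 := by
  have hs : 0 < D.s i ^ 2 := pow_pos (hD.hs i) 2
  rcases le_or_gt (D.a i) 0 with ha | ha
  · nlinarith
  · nlinarith [(lt_div_iff₀ ha).1 (hτa i ha)]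

end Dat

/-- Lemma 5 of the paper: monotonicity of `B̃₋₁(τ,·)`. -/
theorem stmt4 {n : ℕ} (D : Dat n) (hD : D.Good) (troot : Fin n → ℝ) (τ : ℝ)
    (hτ : D.TauOK troot τ) (W₁ W₂ : Matrix (Fin n) (Fin n) ℝ)
    (h1 : Substoch W₁) (h2 : Substoch W₂) (hle : ∀ i j, W₁ i j ≤ W₂ i j) :
    ∀ i j, D.Btm1 τ W₁ i j ≤ D.Btm1 τ W₂ i j := by
  obtain ⟨-, hτ0, hτa, -⟩ := hτ
  have hB0 := hD.B0_diag_neg hτ0.le hτa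
  intro i j
  rw [Dat.Btm1, Dat.Btm1, D.B0_eq_diagonal, inv_diagonal_of_ne_zero fun k => (hB0 k).ne,
    diagonal_neg, diagonal_mul, diagonal_mul]
  exact mul_le_mul_of_nonneg_left (hD.Bm1_apply_mono hτ0.le h1 h2 hle i j)
    (neg_nonneg.2 (inv_nonpos.2 (hB0 i).le))
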